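/- For every natural number k not divisible by 3, the k-ary 1/3-threshold function f : {0,1}^k → {0,1}, defined by f(x) = 1 if (Σ x_i)/k > 1/3 and f(x) = 0 otherwise, is a polymorphism of the PCSP template (1IN3, 3NAE2): whenever k triples each containing exactly one 1 are given, the triple obtained by applying f to each coordinate is not constant. -/
import Mathlib


/-- The k-ary 1/3-threshold function: outputs 1 iff (Σ xᵢ)/k > 1/3. -/
def threshold (k : ℕ) (x : Fin k → Bool) : Bool :=
  decide (k < 3 * (∑ i, if x i then 1 else 0 : ℕ))

/-- For k not divisible by 3, the 1/3-threshold function is a polymorphism of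
(1IN3, 3NAE2): applied to k triples each with exactly one 1, the resulting
triple is not constant. -/
theorem threshold_polymorphism (k : ℕ) (hk : ¬ (3 ∣ k))
    (r : Fin k → Fin 3 → Bool)
    (hr : ∀ i, (∑ j, if r i j then 1 else 0 : ℕ) = 1) :
    ¬ (threshold k (fun i => r i 0) = threshold k (fun i => r i 1) ∧
       threshold k (fun i => r i 1) = threshold k (fun i => r i 2)) := by
  rintro ⟨h1, h2⟩
  have hsum : (∑ i, if r i 0 then 1 else 0 : ℕ) + (∑ i, if r i 1 then 1 else 0)
      + (∑ i, if r i 2 then 1 else 0) = k := by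
    have := Finset.sum_comm (s := Finset.univ) (t := Finset.univ)
      (f := fun (i : Fin k) (j : Fin 3) => (if r i j then 1 else 0 : ℕ))
    simp only [hr, Finset.sum_const, Finset.card_univ, Fintype.card_fin, smul_eq_mul,
      mul_one, Fin.sum_univ_three] at this
    omega
  simp only [threshold, decide_eq_decide] at h1 h2
  omega
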